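/- Let n ≥ 1, let 𝕛 and A be n×n quaternionic matrices with 𝕛ᴴ = −𝕛 and Aᴴ𝕛 = −𝕛A, and let X₀ ∈ ℍⁿ be a column vector with A·X₀ = 0. For any column Y ∈ ℍⁿ, form the (n+2)×(n+2) quaternionic block matrices with block sizes (1, n, 1): X̃₀ = [[0, (A·X₀)ᴴ𝕛, 0], [X₀, 0, A·X₀], [0, −X₀ᴴ𝕛, 0]] and Ỹ = [[0, (A·Y)ᴴ𝕛, 0], [Y, 0, A·Y], [0, −Yᴴ𝕛, 0]]. Then the trace of the product X̃₀·Ỹ has zero real part. Consequently, if A has a nonzero kernel, the real trace form on the space 𝔪 = {X̃ : X ∈ ℍⁿ} of such matrices is degenerate. -/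

import Mathlib

open Quaternion Matrix

/-- The element `X̃ = [[0, (AX)ᴴ𝕛, 0], [X, 0, AX], [0, −Xᴴ𝕛, 0]]` of the
reductive complement `𝔪`, in `(1, n, 1)`-block form. -/
noncomputable def mTilde (n : ℕ) (𝕛 A : Matrix (Fin n) (Fin n) ℍ[ℝ])
    (X : Fin n → ℍ[ℝ]) :
    Matrix (Fin 1 ⊕ Fin n ⊕ Fin 1) (Fin 1 ⊕ Fin n ⊕ Fin 1) ℍ[ℝ] :=
  Matrix.of fun r c =>
    match r, c with
    | Sum.inl _, Sum.inr (Sum.inl l) => ∑ k, star (A.mulVec X k) * 𝕛 k l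
    | Sum.inr (Sum.inl k), Sum.inl _ => X k
    | Sum.inr (Sum.inl k), Sum.inr (Sum.inr _) => A.mulVec X k
    | Sum.inr (Sum.inr _), Sum.inr (Sum.inl l) => -∑ k, star (X k) * 𝕛 k l
    | _, _ => 0


set_option maxHeartbeats 1600000 in
private lemma re_sum' {ι : Type*} (s : Finset ι) (f : ι → ℍ[ℝ]) :
    (∑ i ∈ s, f i).re = ∑ i ∈ s, (f i).re :=
  map_sum (QuaternionAlgebra.reₗ (-1 : ℝ) (0 : ℝ) (-1 : ℝ)) f s

set_option maxHeartbeats 1600000 in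
/-- Let `𝕛ᴴ = -𝕛`, `Aᴴ𝕛 = -𝕛A`, and let `X₀ ∈ ℍⁿ` satisfy
`A·X₀ = 0`.  Then for every `Y ∈ ℍⁿ` the trace of `X̃₀·Ỹ` has zero real part;
consequently, if `A` has a nonzero kernel, the real trace form on
`𝔪 = {X̃ : X ∈ ℍⁿ}` is degenerate. -/
theorem trace_form_degenerate_on_kernel
    (n : ℕ) (hn : 1 ≤ n)
    (𝕛 A : Matrix (Fin n) (Fin n) ℍ[ℝ])
    (hskew : 𝕛ᴴ = -𝕛) (hA : Aᴴ * 𝕛 = -(𝕛 * A))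
    (X₀ : Fin n → ℍ[ℝ]) (hX₀ : A.mulVec X₀ = 0) :
    (∀ Y : Fin n → ℍ[ℝ],
        (Matrix.trace (mTilde n 𝕛 A X₀ * mTilde n 𝕛 A Y)).re = 0) ∧
    (X₀ ≠ 0 → ∃ Z : Fin n → ℍ[ℝ], Z ≠ 0 ∧
        ∀ Y : Fin n → ℍ[ℝ],
          (Matrix.trace (mTilde n 𝕛 A Z * mTilde n 𝕛 A Y)).re = 0) := by
  set v : Fin n → ℍ[ℝ] := 𝕛.mulVec X₀ with hv
  have hAv : Aᴴ.mulVec v = 0 := by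
    rw [hv, Matrix.mulVec_mulVec, hA, Matrix.neg_mulVec, ← Matrix.mulVec_mulVec, hX₀]
    simp
  have h1 : ∀ i, ∑ j, star (A j i) * v j = 0 := by
    intro i
    have := congrFun hAv i
    simpa [Matrix.mulVec, dotProduct, Matrix.conjTranspose_apply] using this
  have h2 : ∀ i, ∑ l, star (v l) * A l i = 0 := by
    intro i
    have := congrArg star (h1 i)
    simpa [star_sum, StarMul.star_mul] using this
  have hJ : ∀ k l, star (𝕛 k l) = -𝕛 l k := by
    intro k l
    have := congrFun (congrFun hskew l) k
    simpa [Matrix.conjTranspose_apply] using this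
  have key : ∀ Y : Fin n → ℍ[ℝ],
      (Matrix.trace (mTilde n 𝕛 A X₀ * mTilde n 𝕛 A Y)).re = 0 := by
    intro Y
    have htr : Matrix.trace (mTilde n 𝕛 A X₀ * mTilde n 𝕛 A Y)
        = (∑ k, X₀ k * (∑ j, star (A.mulVec Y j) * 𝕛 j k))
          - ∑ l, (∑ k, star (X₀ k) * 𝕛 k l) * A.mulVec Y l := by
      simp [Matrix.trace, Matrix.diag, Matrix.mul_apply, mTilde, Fintype.sum_sum_type, hX₀,
        sub_eq_add_neg]
    have hterm2 : ∑ l, (∑ k, star (X₀ k) * 𝕛 k l) * A.mulVec Y l = 0 := by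
      have hrow : ∀ l, (∑ k, star (X₀ k) * 𝕛 k l) = -star (v l) := by
        intro l
        have : star (v l) = ∑ k, star (X₀ k) * star (𝕛 l k) := by
          simp [hv, Matrix.mulVec, dotProduct, star_sum, StarMul.star_mul]
        rw [this]
        simp [hJ]
      calc ∑ l, (∑ k, star (X₀ k) * 𝕛 k l) * A.mulVec Y l
          = -∑ l, star (v l) * A.mulVec Y l := by
            simp [hrow]
        _ = -∑ l, ∑ i, star (v l) * A l i * Y i := by
            congr 1; refine Finset.sum_congr rfl fun l _ => ?_
            simp [Matrix.mulVec, dotProduct, Finset.mul_sum, mul_assoc]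
        _ = -∑ i, (∑ l, star (v l) * A l i) * Y i := by
            rw [Finset.sum_comm]
            simp [Finset.sum_mul]
        _ = 0 := by simp [h2]
    have hswap : ∀ a b : ℍ[ℝ], (a * b).re = (b * a).re := by
      intro a b; simp [Quaternion.re_mul]; ring
    have hterm1 : (∑ k, X₀ k * (∑ j, star (A.mulVec Y j) * 𝕛 j k)).re = 0 := by
      have hre : (∑ k, X₀ k * (∑ j, star (A.mulVec Y j) * 𝕛 j k)).re
          = (∑ k, (∑ j, star (A.mulVec Y j) * 𝕛 j k) * X₀ k).re := by
        rw [re_sum', re_sum']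
        exact Finset.sum_congr rfl fun k _ => hswap _ _
      rw [hre]
      have hz : ∑ k, (∑ j, star (A.mulVec Y j) * 𝕛 j k) * X₀ k = 0 := by
        calc ∑ k, (∑ j, star (A.mulVec Y j) * 𝕛 j k) * X₀ k
            = ∑ j, star (A.mulVec Y j) * v j := by
              simp only [Finset.sum_mul]
              rw [Finset.sum_comm]
              refine Finset.sum_congr rfl fun j _ => ?_
              simp [hv, Matrix.mulVec, dotProduct, Finset.mul_sum, mul_assoc]
          _ = ∑ i, star (Y i) * (∑ j, star (A j i) * v j) := by
              have : ∀ j, star (A.mulVec Y j) = ∑ i, star (Y i) * star (A j i) := by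
                intro j
                simp [Matrix.mulVec, dotProduct, star_sum, StarMul.star_mul]
              simp only [this, Finset.sum_mul]
              rw [Finset.sum_comm]
              refine Finset.sum_congr rfl fun i _ => ?_
              simp [Finset.mul_sum, mul_assoc]
          _ = 0 := by simp [h1]
      rw [hz]
      simp
    rw [htr]
    rw [Quaternion.re_sub, hterm2, hterm1]
    simp
  exact ⟨key, fun hne => ⟨X₀, hne, key⟩⟩
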